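/- Let k, m, n be natural numbers. Let M be a complex positive semidefinite matrix of size (k·m + n)×(k·m + n) of block form M = fromBlocks (blockDiagonal D) C (Cᴴ) M_b, where D : Fin k → Matrix (Fin m) (Fin m) ℂ is a family of m×m blocks, C is (k·m)×n, and M_b is n×n. Then there exist a family R_a : Fin k → Matrix (Fin m) (Fin m) ℂ, a (k·m)×n matrix R_ab, and an n×n matrix R_b such that, setting R = fromBlocks (blockDiagonal R_a) R_ab 0 R_b, one has M = Rᴴ ⬝ R. (This is the matrix-theoretic core of the theorem that every NPA level-1 sum-of-squares certificate can be converted into a 'nice' one: a PSD moment matrix whose top-left corner is block diagonal admits a Gram factorization R with zero lower-left block and block-diagonal top-left block.) -/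

import Mathlib

open Matrix
open scoped ComplexOrder MatrixOrder

/-!
Write the matrix as `Bᴴ * B` and split `B = [B₁ B₂]` by columns. If `Lᴴ * L = B₁ᴴ * B₁`, then
`B₁ = U * L` for a matrix `U` such that `U * Uᴴ` is an orthogonal projection: take
`U = B₁ * G * Lᴴ` with `G` a Hermitian generalized inverse of `B₁ᴴ * B₁`. With `X = Uᴴ * B₂` one
gets `Lᴴ * X = B₁ᴴ * B₂`, and `B₂ᴴ * B₂ - Xᴴ * X = B₂ᴴ * (1 - U * Uᴴ) * B₂` is positive
semidefinite, hence of the form `Yᴴ * Y`. For the block diagonal corner, `L` is assembled from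
Gram factors of the diagonal blocks.
-/

namespace Matrix

variable {𝕜 : Type*} [RCLike 𝕜] {ι κ μ ν : Type*} [Fintype ι] [Fintype κ] [Fintype μ] [Fintype ν]

theorem PosSemidef.exists_eq_conjTranspose_mul_self [DecidableEq ι] {A : Matrix ι ι 𝕜}
    (hA : A.PosSemidef) : ∃ B : Matrix ι ι 𝕜, A = Bᴴ * B := by
  simpa [star_eq_conjTranspose] using CStarAlgebra.nonneg_iff_eq_star_mul_self.mp hA.nonneg

theorem IsHermitian.exists_isHermitian_mul_mul_eq [DecidableEq ι] {A : Matrix ι ι 𝕜}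
    (hA : A.IsHermitian) : ∃ G : Matrix ι ι 𝕜, G.IsHermitian ∧ A * G * A = A := by
  have hA' : IsSelfAdjoint A := hA
  have hmul (f g : ℝ → ℝ) : cfc f A * cfc g A = cfc (fun x => f x * g x) A :=
    (cfc_mul f g A (A.finite_real_spectrum.continuousOn f)
      (A.finite_real_spectrum.continuousOn g)).symm
  -- since `0⁻¹ = 0`, this is the Moore–Penrose inverse of `A`
  refine ⟨cfc (·⁻¹ : ℝ → ℝ) A, cfc_predicate _ A, ?_⟩
  calc A * cfc (·⁻¹) A * A = cfc id A * cfc (·⁻¹) A * cfc id A := by rw [cfc_id ℝ A]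
    _ = A := by simp only [hmul, id, mul_inv_mul_cancel, cfc_id' ℝ A]

theorem exists_eq_mul_isStarProjection_of_conjTranspose_mul_self_eq [DecidableEq ι]
    {B : Matrix κ ι 𝕜} {L : Matrix μ ι 𝕜} (h : Lᴴ * L = Bᴴ * B) :
    ∃ U : Matrix κ μ 𝕜, B = U * L ∧ IsStarProjection (U * Uᴴ) := by
  obtain ⟨G, hG, hAGA⟩ := (isHermitian_conjTranspose_mul_self B).exists_isHermitian_mul_mul_eq
  have hBGA : B * G * (Bᴴ * B) = B := by
    have : B * (G * (Bᴴ * B) - 1) = 0 :=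
      (conjTranspose_mul_self_mul_eq_zero B _).mp
        (by rw [mul_sub, mul_one, ← mul_assoc, hAGA, sub_self])
    rwa [Matrix.mul_sub, Matrix.mul_one, sub_eq_zero, ← Matrix.mul_assoc] at this
  have hUU : B * G * Lᴴ * (B * G * Lᴴ)ᴴ = B * G * Bᴴ :=
    calc B * G * Lᴴ * (B * G * Lᴴ)ᴴ = B * G * (Lᴴ * L) * G * Bᴴ := by
          simp only [conjTranspose_mul, conjTranspose_conjTranspose, hG.eq, Matrix.mul_assoc]
      _ = B * G * Bᴴ := by rw [h, hBGA]
  refine ⟨B * G * Lᴴ, by rw [Matrix.mul_assoc _ Lᴴ, h, hBGA], hUU ▸ ⟨?_, ?_⟩⟩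
  · calc B * G * Bᴴ * (B * G * Bᴴ) = B * G * (Bᴴ * B) * G * Bᴴ := by simp only [Matrix.mul_assoc]
      _ = B * G * Bᴴ := by rw [hBGA]
  · simp only [IsSelfAdjoint, star_eq_conjTranspose, conjTranspose_mul, conjTranspose_conjTranspose,
      hG.eq, Matrix.mul_assoc]

theorem exists_conjTranspose_mul_eq_and_posSemidef_sub [DecidableEq ι] [DecidableEq κ]
    {B₁ : Matrix κ ι 𝕜} {L : Matrix μ ι 𝕜} (h : Lᴴ * L = B₁ᴴ * B₁) (B₂ : Matrix κ ν 𝕜) :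
    ∃ X : Matrix μ ν 𝕜, Lᴴ * X = B₁ᴴ * B₂ ∧ (B₂ᴴ * B₂ - Xᴴ * X).PosSemidef := by
  obtain ⟨U, rfl, hP⟩ := exists_eq_mul_isStarProjection_of_conjTranspose_mul_self_eq h
  refine ⟨Uᴴ * B₂, by rw [conjTranspose_mul, Matrix.mul_assoc], ?_⟩
  convert (nonneg_iff_posSemidef.mp hP.one_sub_nonneg).conjTranspose_mul_mul_same B₂ using 1
  simp only [conjTranspose_mul, conjTranspose_conjTranspose, Matrix.mul_sub, Matrix.sub_mul,
    Matrix.mul_one, Matrix.mul_assoc]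

theorem PosSemidef.exists_eq_fromBlocks_conjTranspose_mul_self [DecidableEq ι] [DecidableEq ν]
    {A : Matrix ι ι 𝕜} {C : Matrix ι ν 𝕜} {M : Matrix ν ν 𝕜}
    (hM : (fromBlocks A C Cᴴ M).PosSemidef) {L : Matrix μ ι 𝕜} (hL : Lᴴ * L = A) :
    ∃ (X : Matrix μ ν 𝕜) (Y : Matrix ν ν 𝕜),
      fromBlocks A C Cᴴ M = (fromBlocks L X 0 Y)ᴴ * fromBlocks L X 0 Y := by
  obtain ⟨B, hB⟩ := hM.exists_eq_conjTranspose_mul_self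
  rw [← fromCols_toCols B, conjTranspose_fromCols_eq_fromRows_conjTranspose, fromRows_mul_fromCols,
    fromBlocks_inj] at hB
  obtain ⟨rfl, rfl, -, rfl⟩ := hB
  obtain ⟨X, hX, hXY⟩ := exists_conjTranspose_mul_eq_and_posSemidef_sub hL B.toCols₂
  obtain ⟨Y, hY⟩ := hXY.exists_eq_conjTranspose_mul_self
  refine ⟨X, Y, ?_⟩
  rw [fromBlocks_conjTranspose, fromBlocks_multiply]
  simp only [fromBlocks_inj, conjTranspose_zero, Matrix.zero_mul, Matrix.mul_zero, add_zero, hL, hX,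
    true_and]
  refine ⟨?_, sub_eq_iff_eq_add'.mp hY⟩
  simpa only [conjTranspose_mul, conjTranspose_conjTranspose] using congrArg (·ᴴ) hX.symm

end Matrix

/-- A positive semidefinite matrix whose top-left corner is block diagonal admits a
Gram factorization with zero lower-left block and block-diagonal top-left block. -/
theorem nice_cholesky_of_blockDiagonal_corner (k m n : ℕ)
    (D : Fin k → Matrix (Fin m) (Fin m) ℂ)
    (C : Matrix (Fin m × Fin k) (Fin n) ℂ)
    (M_b : Matrix (Fin n) (Fin n) ℂ)
    (hM : (Matrix.fromBlocks (Matrix.blockDiagonal D) C Cᴴ M_b).PosSemidef) :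
    ∃ (R_a : Fin k → Matrix (Fin m) (Fin m) ℂ)
      (R_ab : Matrix (Fin m × Fin k) (Fin n) ℂ)
      (R_b : Matrix (Fin n) (Fin n) ℂ),
      Matrix.fromBlocks (Matrix.blockDiagonal D) C Cᴴ M_b =
        (Matrix.fromBlocks (Matrix.blockDiagonal R_a) R_ab 0 R_b)ᴴ *
          (Matrix.fromBlocks (Matrix.blockDiagonal R_a) R_ab 0 R_b) := by
  have hD (i : Fin k) : (D i).PosSemidef := by
    convert hM.submatrix (fun j => Sum.inl (j, i))
    ext a b
    simp [blockDiagonal_apply]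
  choose R_a hR_a using fun i => (hD i).exists_eq_conjTranspose_mul_self
  have hL : (blockDiagonal R_a)ᴴ * blockDiagonal R_a = blockDiagonal D := by
    rw [blockDiagonal_conjTranspose, ← blockDiagonal_mul]
    exact congrArg blockDiagonal (funext fun i => (hR_a i).symm)
  exact ⟨R_a, hM.exists_eq_fromBlocks_conjTranspose_mul_self hL⟩
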